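/- arXiv:2003.00930 — 3 statements merged into one kernel-verified Lean document; each statement's English description precedes it below -/
import Mathlib

section
/- Let X, Y be i.i.d. nonnegative random variables with common differentiable probability density f on ℝ_+, and let U be Uniform[0,1] independent of (X,Y). If U(X+Y) has the same distribution as X, then f(x) = (1/m) e^{−x/m} for some m > 0; i.e., the exponential distributions are the unique fixed points of the operation (X,Y,U) ↦ U(X+Y) among distributions with differentiable densities. -/
/-!
The Laplace transform `L p = E e^{-pX}` of a fixed point satisfies
`L p = E L(pU)² = p⁻¹ ∫₀ᵖ L²`, so `p L' = L² - L` on `(0, ∞)`. Along this Bernoulli equation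
`(1 - L p) / (p L p)` is constant, i.e. `L p = (1 + m p)⁻¹`, the Laplace transform of the
exponential law of mean `m`; `m > 0` because the law has no atom at `0`. The values
`L n = ∫ (e^{-x})ⁿ f(x) dx`, `n ∈ ℕ`, determine the density almost everywhere, since polynomials
in `e^{-x} ∈ [0, 1]` approximate every continuous function of `e^{-x}` uniformly (Weierstrass);
continuity of `f` on `(0, ∞)` upgrades this to equality everywhere there.
-/

open MeasureTheory Set Filter Real Topology
open scoped ENNReal

section LaplaceUniqueness

variable {h : ℝ → ℝ}

lemma integrable_comp_exp_neg_mul (hint : Integrable h) (hsupp : ∀ x < 0, h x = 0)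
    {G : ℝ → ℝ} (hG : Continuous G) : Integrable fun x => G (rexp (-x)) * h x := by
  obtain ⟨C, hC⟩ := isCompact_Icc.exists_bound_of_continuousOn (hG.continuousOn (s := Icc 0 1))
  refine (hint.norm.const_mul C).mono'
    ((hG.comp (by fun_prop)).aestronglyMeasurable.mul hint.aestronglyMeasurable)
    (Eventually.of_forall fun x => ?_)
  rcases lt_or_ge x 0 with hx | hx
  · simp [hsupp x hx]
  · rw [norm_mul]
    exact mul_le_mul_of_nonneg_right
      (hC _ ⟨(exp_pos _).le, exp_le_one_iff.2 (by linarith)⟩) (norm_nonneg _)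

/-- Freezing the logarithm beyond the support of `ψ` keeps `G` continuous at `0`. -/
lemma HasCompactSupport.exists_continuous_comp_exp_neg_eqOn {ψ : ℝ → ℝ} (hψ : Continuous ψ)
    (hψc : HasCompactSupport ψ) :
    ∃ G : ℝ → ℝ, Continuous G ∧ EqOn (fun x => G (rexp (-x))) ψ (Ici 0) := by
  obtain ⟨R, hR⟩ := hψc.isCompact.bddAbove
  have hψR : ∀ x, R < x → ψ x = 0 := fun x hx =>
    image_eq_zero_of_notMem_tsupport fun hmem => (hR hmem).not_gt hx
  have hlog : Continuous fun y => log (max y (rexp (-(R + 1)))) :=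
    (continuous_id.max continuous_const).log fun y => (lt_max_of_lt_right (exp_pos _)).ne'
  refine ⟨fun y => ψ (-log (max y (rexp (-(R + 1))))), hψ.comp hlog.neg, fun x (hx : 0 ≤ x) => ?_⟩
  rcases le_or_gt x (R + 1) with hxR | hxR
  · simp only [max_eq_left (exp_le_exp.2 (neg_le_neg hxR)), log_exp, neg_neg]
  · simp only [max_eq_right (exp_le_exp.2 (neg_le_neg hxR.le)), log_exp, neg_neg]
    rw [hψR _ (by linarith), hψR _ (by linarith)]

variable (hint : Integrable h) (hsupp : ∀ x < 0, h x = 0)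
include hint hsupp

section Moments

variable (hmom : ∀ n : ℕ, ∫ x, rexp (-x) ^ n * h x = 0)
include hmom

lemma integral_polynomial_eval_exp_neg_mul_eq_zero (q : Polynomial ℝ) :
    ∫ x, q.eval (rexp (-x)) * h x = 0 := by
  induction q using Polynomial.induction_on' with
  | add p q hp hq =>
    simp only [Polynomial.eval_add, add_mul]
    rw [integral_add (integrable_comp_exp_neg_mul hint hsupp p.continuous)
      (integrable_comp_exp_neg_mul hint hsupp q.continuous), hp, hq, add_zero]
  | monomial n a =>
    simp only [Polynomial.eval_monomial, mul_assoc]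
    rw [integral_const_mul, hmom n, mul_zero]

lemma integral_comp_exp_neg_mul_eq_zero {G : ℝ → ℝ} (hG : Continuous G) :
    ∫ x, G (rexp (-x)) * h x = 0 := by
  set C := ∫ x, ‖h x‖
  have hC : 0 ≤ C := integral_nonneg fun x => norm_nonneg _
  suffices ∀ ε > 0, |∫ x, G (rexp (-x)) * h x| ≤ ε * C by
    refine abs_nonpos_iff.1 (le_of_forall_pos_le_add fun δ hδ => ?_)
    calc _ ≤ δ / (C + 1) * C := this _ (by positivity)
      _ ≤ 0 + δ := by rw [zero_add, div_mul_eq_mul_div, div_le_iff₀ (by positivity)]; nlinarith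
  intro ε hε
  obtain ⟨q, hq⟩ := exists_polynomial_near_of_continuousOn 0 1 G hG.continuousOn ε hε
  have hdiff : ∫ x, G (rexp (-x)) * h x = ∫ x, (G (rexp (-x)) - q.eval (rexp (-x))) * h x := by
    simp only [sub_mul]
    rw [integral_sub (integrable_comp_exp_neg_mul hint hsupp hG)
      (integrable_comp_exp_neg_mul hint hsupp q.continuous),
      integral_polynomial_eval_exp_neg_mul_eq_zero hint hsupp hmom, sub_zero]
  rw [hdiff, ← integral_const_mul, ← Real.norm_eq_abs]
  refine norm_integral_le_of_norm_le (hint.norm.const_mul ε) (Eventually.of_forall fun x => ?_)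
  rcases lt_or_ge x 0 with hx | hx
  · simp [hsupp x hx]
  · rw [norm_mul, Real.norm_eq_abs, abs_sub_comm]
    exact mul_le_mul_of_nonneg_right
      (hq _ ⟨(exp_pos _).le, exp_le_one_iff.2 (by linarith)⟩).le (norm_nonneg _)

lemma ae_eq_zero_of_integral_exp_neg_pow_mul_eq_zero : h =ᵐ[volume] 0 := by
  refine ae_eq_zero_of_integral_contDiff_smul_eq_zero hint.locallyIntegrable fun ψ hψ hψc => ?_
  obtain ⟨G, hG, hGψ⟩ := hψc.exists_continuous_comp_exp_neg_eqOn hψ.continuous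
  rw [← integral_comp_exp_neg_mul_eq_zero hint hsupp hmom hG]
  refine integral_congr_ae (Eventually.of_forall fun x => ?_)
  rcases lt_or_ge x 0 with hx | hx
  · simp [hsupp x hx]
  · simp [hGψ hx]

end Moments

theorem ae_eq_of_integral_exp_neg_nat_mul_eq {g : ℝ → ℝ} (hgint : Integrable g)
    (hgsupp : ∀ x < 0, g x = 0)
    (heq : ∀ n : ℕ, ∫ x, rexp (-(n * x)) * h x = ∫ x, rexp (-(n * x)) * g x) :
    h =ᵐ[volume] g := by
  refine (sub_ae_eq_zero _ _).1 <| ae_eq_zero_of_integral_exp_neg_pow_mul_eq_zero (hint.sub hgint)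
    (fun x hx => by simp [hsupp x hx, hgsupp x hx]) fun n => ?_
  have hpow : ∀ x, rexp (-x) ^ n = rexp (-(n * x)) := fun x => by rw [← exp_nat_mul, mul_neg]
  simp only [Pi.sub_apply, mul_sub]
  rw [integral_sub (integrable_comp_exp_neg_mul hint hsupp (continuous_pow n))
    (integrable_comp_exp_neg_mul hgint hgsupp (continuous_pow n))]
  simp only [hpow, heq, sub_self]

end LaplaceUniqueness

lemma lintegral_exp_neg_mul_eq_of_map_eq {μ ν : Measure ℝ} [SFinite μ] [SFinite ν]
    (hfix : (μ.prod (μ.prod ν)).map (fun z : ℝ × ℝ × ℝ => z.2.2 * (z.1 + z.2.1)) = μ) (p : ℝ) :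
    ∫⁻ x, ENNReal.ofReal (rexp (-(p * x))) ∂μ
      = ∫⁻ u, (∫⁻ x, ENNReal.ofReal (rexp (-(p * u * x))) ∂μ) ^ 2 ∂ν := by
  set E : ℝ → ℝ → ℝ≥0∞ := fun q x => ENNReal.ofReal (rexp (-(q * x)))
  have hE : ∀ q, Measurable (E q) := fun q => by fun_prop
  have hsplit : ∀ u x y, E p (u * (x + y)) = E (p * u) x * E (p * u) y := fun u x y => by
    simp only [E]
    rw [← ENNReal.ofReal_mul (exp_pos _).le, ← exp_add]
    ring_nf
  calc ∫⁻ x, E p x ∂μ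
      = ∫⁻ z, E p (z.2.2 * (z.1 + z.2.1)) ∂(μ.prod (μ.prod ν)) := by
        conv_lhs => rw [← hfix]
        exact lintegral_map (hE p) (by fun_prop)
    _ = ∫⁻ w, E p (w.2 * (w.1.1 + w.1.2)) ∂((μ.prod μ).prod ν) :=
        ((measurePreserving_prodAssoc μ μ ν).lintegral_comp_emb
          MeasurableEquiv.prodAssoc.measurableEmbedding _).symm
    _ = ∫⁻ u, ∫⁻ xy, E (p * u) xy.1 * E (p * u) xy.2 ∂(μ.prod μ) ∂ν := by
        rw [lintegral_prod_symm _ (by fun_prop)]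
        simp only [hsplit]
    _ = ∫⁻ u, (∫⁻ x, E (p * u) x ∂μ) ^ 2 ∂ν := by
        simp only [lintegral_prod_mul (hE _).aemeasurable (hE _).aemeasurable, sq]

noncomputable def laplace (μ : Measure ℝ) (p : ℝ) : ℝ := ∫ x, rexp (-(p * x)) ∂μ

section Laplace

variable {μ : Measure ℝ} (hμ : ∀ᵐ x ∂μ, 0 ≤ x)
include hμ

lemma norm_exp_neg_mul_le_one {p : ℝ} (hp : 0 ≤ p) : ∀ᵐ x ∂μ, ‖rexp (-(p * x))‖ ≤ 1 :=
  hμ.mono fun x hx => by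
    rw [norm_of_nonneg (exp_pos _).le, exp_le_one_iff, neg_nonpos]
    exact mul_nonneg hp hx

section Finite

variable [IsFiniteMeasure μ]

lemma integrable_exp_neg_mul {p : ℝ} (hp : 0 ≤ p) : Integrable (fun x => rexp (-(p * x))) μ :=
  (integrable_const 1).mono' (by fun_prop) (norm_exp_neg_mul_le_one hμ hp)

lemma laplace_pos [NeZero μ] {p : ℝ} (hp : 0 ≤ p) : 0 < laplace μ p :=
  integral_exp_pos (integrable_exp_neg_mul hμ hp)

lemma continuousOn_laplace : ContinuousOn (laplace μ) (Ici 0) :=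
  continuousOn_of_dominated (fun _ _ => by fun_prop) (fun _ hp => norm_exp_neg_mul_le_one hμ hp)
    (integrable_const 1) (Eventually.of_forall fun _ => by fun_prop)

lemma laplace_eq_integral_sq_of_map_eq {ν : Measure ℝ} [SFinite ν] (hν : ∀ᵐ u ∂ν, 0 ≤ u)
    (hfix : (μ.prod (μ.prod ν)).map (fun z : ℝ × ℝ × ℝ => z.2.2 * (z.1 + z.2.1)) = μ)
    {p : ℝ} (hp : 0 ≤ p) :
    laplace μ p = ∫ u, laplace μ (p * u) ^ 2 ∂ν := by
  have hL : ∀ q, laplace μ q = (∫⁻ x, ENNReal.ofReal (rexp (-(q * x))) ∂μ).toReal := fun q =>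
    integral_eq_lintegral_of_nonneg_ae (Eventually.of_forall fun _ => (exp_pos _).le)
      (by fun_prop)
  have hfin : ∀ q, 0 ≤ q → ∫⁻ x, ENNReal.ofReal (rexp (-(q * x))) ∂μ < ∞ := fun q hq =>
    (integrable_exp_neg_mul hμ hq).lintegral_lt_top
  simp only [hL, ← ENNReal.toReal_pow]
  rw [lintegral_exp_neg_mul_eq_of_map_eq hfix, integral_toReal]
  · exact ((Measurable.lintegral_prod_right'
      (f := fun z : ℝ × ℝ => ENNReal.ofReal (rexp (-(p * z.1 * z.2)))) (by fun_prop)).pow_const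
      _).aemeasurable
  · exact hν.mono fun u hu => ENNReal.pow_lt_top (hfin _ (mul_nonneg hp hu))

lemma mul_laplace_eq_integral_sq_of_map_eq
    (hfix : (μ.prod (μ.prod (volume.restrict (Icc 0 1)))).map
      (fun z : ℝ × ℝ × ℝ => z.2.2 * (z.1 + z.2.1)) = μ) {p : ℝ} (hp : 0 < p) :
    p * laplace μ p = ∫ s in 0..p, laplace μ s ^ 2 := by
  rw [laplace_eq_integral_sq_of_map_eq hμ ((ae_restrict_mem measurableSet_Icc).mono fun _ hu => hu.1)
    hfix hp.le, integral_Icc_eq_integral_Ioc, ← intervalIntegral.integral_of_le zero_le_one,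
    intervalIntegral.integral_comp_mul_left (fun s => laplace μ s ^ 2) hp.ne', mul_zero, mul_one,
    smul_eq_mul, mul_inv_cancel_left₀ hp.ne']

end Finite

lemma laplace_lt_one [IsProbabilityMeasure μ] (hμ0 : μ {0} = 0) {p : ℝ} (hp : 0 < p) :
    laplace μ p < 1 := by
  have hpos : 0 < ∫ x, (1 - rexp (-(p * x))) ∂μ := by
    refine (integral_pos_iff_support_of_nonneg_ae (f := fun x => 1 - rexp (-(p * x)))
      ((norm_exp_neg_mul_le_one hμ hp.le).mono fun x hx => ?_)
      ((integrable_const 1).sub (integrable_exp_neg_mul hμ hp.le))).2 ?_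
    · rw [norm_of_nonneg (exp_pos _).le] at hx
      simpa using hx
    · have hsupp : Function.support (fun x => 1 - rexp (-(p * x))) = {0}ᶜ := by
        ext x
        simp [sub_eq_zero, eq_comm (a := (1 : ℝ)), hp.ne']
      rw [hsupp, (prob_compl_eq_one_iff (measurableSet_singleton 0)).2 hμ0]
      exact one_pos
  rw [integral_sub (integrable_const 1) (integrable_exp_neg_mul hμ hp.le)] at hpos
  simpa [laplace] using hpos

end Laplace

section MulEqIntegralSq

variable {L : ℝ → ℝ} (hc : ContinuousOn L (Ici 0))
  (hL : ∀ p > 0, p * L p = ∫ s in 0..p, L s ^ 2)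
include hc hL

lemma hasDerivAt_of_mul_eq_integral_sq {p : ℝ} (hp : 0 < p) :
    HasDerivAt L ((L p ^ 2 - L p) / p) p := by
  have hsq : ContinuousOn (fun s => L s ^ 2) (Ici 0) := hc.pow 2
  have hA : HasDerivAt (fun q => ∫ s in 0..q, L s ^ 2) (L p ^ 2) p :=
    intervalIntegral.integral_hasDerivAt_right
      ((hsq.mono (uIcc_of_le hp.le ▸ Icc_subset_Ici_self)).intervalIntegrable)
      ((hsq.mono Ioi_subset_Ici_self).stronglyMeasurableAtFilter isOpen_Ioi p hp)
      ((hsq.continuousAt (Ici_mem_nhds hp)))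
  have hLA : (fun q => (∫ s in 0..q, L s ^ 2) / q) =ᶠ[𝓝 p] L :=
    eventually_of_mem (Ioi_mem_nhds hp) fun q (hq : 0 < q) => by
      simp only [← hL q hq, mul_div_cancel_left₀ _ hq.ne']
  refine ((hA.div (hasDerivAt_id p) hp.ne').congr_of_eventuallyEq hLA.symm).congr_deriv ?_
  rw [← hL p hp, id]
  field_simp

lemma exists_eq_inv_one_add_mul_of_mul_eq_integral_sq (hne : ∀ p > 0, L p ≠ 0) :
    ∃ c, ∀ p > 0, L p = (1 + c * p)⁻¹ := by
  set W : ℝ → ℝ := fun p => (1 - L p) / (p * L p)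
  have hW : ∀ p > 0, HasDerivAt W 0 p := fun p hp => by
    have hD := hasDerivAt_of_mul_eq_integral_sq hc hL hp
    refine (((hasDerivAt_const p 1).sub hD).div ((hasDerivAt_id p).mul hD)
      (mul_ne_zero hp.ne' (hne p hp))).congr_deriv ?_
    have := hne p hp
    simp only [Pi.sub_apply, Pi.mul_apply, id]
    field_simp
    ring
  refine ⟨W 1, fun p (hp : 0 < p) => ?_⟩
  have hWp : W p = W 1 := isOpen_Ioi.is_const_of_deriv_eq_zero isPreconnected_Ioi
    (fun q hq => (hW q hq).differentiableAt.differentiableWithinAt)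
    (fun q hq => (hW q hq).deriv) hp (mem_Ioi.2 one_pos)
  refine eq_inv_of_mul_eq_one_left ?_
  have := hne p hp
  rw [← hWp]
  simp only [W]
  field_simp
  ring

end MulEqIntegralSq

theorem exists_laplace_eq_inv_one_add_mul_of_map_eq {μ : Measure ℝ} [IsProbabilityMeasure μ]
    (hμ : ∀ᵐ x ∂μ, 0 ≤ x) (hμ0 : μ {0} = 0)
    (hfix : (μ.prod (μ.prod (volume.restrict (Icc 0 1)))).map
      (fun z : ℝ × ℝ × ℝ => z.2.2 * (z.1 + z.2.1)) = μ) :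
    ∃ m > 0, ∀ p ≥ 0, laplace μ p = (1 + m * p)⁻¹ := by
  obtain ⟨m, hm⟩ := exists_eq_inv_one_add_mul_of_mul_eq_integral_sq (continuousOn_laplace hμ)
    (fun _ hp => mul_laplace_eq_integral_sq_of_map_eq hμ hfix hp)
    (fun _ hp => (laplace_pos hμ hp.le).ne')
  have h1 : (1 + m)⁻¹ < 1 := by simpa [hm 1 one_pos] using laplace_lt_one hμ hμ0 one_pos
  have h1pos : 0 < (1 + m)⁻¹ := by simpa [hm 1 one_pos] using laplace_pos hμ zero_le_one
  refine ⟨m, by linarith [(inv_lt_one₀ (inv_pos.1 h1pos)).1 h1], fun p hp => ?_⟩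
  rcases hp.eq_or_lt with rfl | hp
  · simp [laplace]
  · exact hm p hp

/-- Parametrized by the mean `m`; Mathlib's `exponentialPDFReal` takes the rate `1 / m`. -/
noncomputable def expDensity (m : ℝ) : ℝ → ℝ := (Ioi 0).indicator fun x => 1 / m * rexp (-x / m)

lemma integrable_expDensity {m : ℝ} (hm : 0 < m) : Integrable (expDensity m) := by
  rw [expDensity, integrable_indicator_iff measurableSet_Ioi]
  simpa [IntegrableOn, div_eq_inv_mul, neg_div, neg_mul] using
    (exp_neg_integrableOn_Ioi 0 (inv_pos.2 hm)).const_mul (1 / m)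

lemma integral_exp_neg_mul_mul_expDensity {m p : ℝ} (hm : 0 < m) (hp : 0 ≤ p) :
    ∫ x, rexp (-(p * x)) * expDensity m x = (1 + m * p)⁻¹ := by
  have hexp : ∀ x, rexp (-(p * x)) * (1 / m * rexp (-x / m)) = 1 / m * rexp (-(p + 1 / m) * x) :=
    fun x => by rw [mul_left_comm, ← exp_add]; ring_nf
  simp only [expDensity, ← indicator_mul_right (Ioi 0) fun x => rexp (-(p * x)), hexp]
  rw [integral_indicator measurableSet_Ioi, integral_const_mul,
    integral_exp_mul_Ioi (by rw [neg_lt_zero]; positivity), mul_zero, exp_zero]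
  field_simp
  ring

lemma isProbabilityMeasure_withDensity_ofReal {α : Type*} [MeasurableSpace α] {μ : Measure α}
    {f : α → ℝ} (hf_nonneg : 0 ≤ᵐ[μ] f) (hf_int : ∫ x, f x ∂μ = 1) :
    IsProbabilityMeasure (μ.withDensity fun x => ENNReal.ofReal (f x)) := by
  constructor
  rw [withDensity_apply _ MeasurableSet.univ, Measure.restrict_univ,
    ← ofReal_integral_eq_lintegral_ofReal (.of_integral_ne_zero (by simp [hf_int])) hf_nonneg,
    hf_int, ENNReal.ofReal_one]

lemma laplace_withDensity_ofReal {μ : Measure ℝ} {f : ℝ → ℝ} (hf : AEMeasurable f μ)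
    (hf_nonneg : 0 ≤ᵐ[μ] f) (p : ℝ) :
    laplace (μ.withDensity fun x => ENNReal.ofReal (f x)) p = ∫ x, rexp (-(p * x)) * f x ∂μ := by
  rw [laplace, integral_withDensity_eq_integral_toReal_smul₀ hf.ennreal_ofReal
    (Eventually.of_forall fun _ => ENNReal.ofReal_lt_top)]
  refine integral_congr_ae (hf_nonneg.mono fun x hx => ?_)
  simp only [ENNReal.toReal_ofReal hx, smul_eq_mul, mul_comm]

theorem exponential_unique_fixed_point_general (f : ℝ → ℝ)
    (hf_nonneg : ∀ x, 0 ≤ f x)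
    (hf_supp : ∀ x < (0 : ℝ), f x = 0)
    (hf_int : ∫ x, f x = 1)
    (hf_diff : DifferentiableOn ℝ f (Ioi 0))
    (hfix : Measure.map (fun p : ℝ × ℝ × ℝ => p.2.2 * (p.1 + p.2.1))
        ((volume.withDensity fun x => ENNReal.ofReal (f x)).prod
          ((volume.withDensity fun x => ENNReal.ofReal (f x)).prod
            (volume.restrict (Icc (0 : ℝ) 1))))
      = volume.withDensity fun x => ENNReal.ofReal (f x)) :
    ∃ m > (0 : ℝ), ∀ x > (0 : ℝ), f x = (1 / m) * Real.exp (-x / m) := by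
  have hf : Integrable f := .of_integral_ne_zero (by simp [hf_int])
  have := isProbabilityMeasure_withDensity_ofReal (Eventually.of_forall hf_nonneg) hf_int
  have hμ : ∀ᵐ x ∂(volume.withDensity fun x => ENNReal.ofReal (f x)), 0 ≤ x :=
    (ae_withDensity_iff' hf.aemeasurable.ennreal_ofReal).2 <| Eventually.of_forall fun x hx => by
      contrapose! hx
      simp [hf_supp x hx]
  obtain ⟨m, hm, hLm⟩ := exists_laplace_eq_inv_one_add_mul_of_map_eq hμ
    (withDensity_absolutelyContinuous _ _ (measure_singleton 0)) hfix
  have hfg : f =ᵐ[volume] expDensity m :=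
    ae_eq_of_integral_exp_neg_nat_mul_eq hf hf_supp (integrable_expDensity hm)
      (fun x hx => indicator_of_notMem (not_lt.2 hx.le) _) fun n => by
        rw [← laplace_withDensity_ofReal hf.aemeasurable (Eventually.of_forall hf_nonneg),
          hLm n n.cast_nonneg, integral_exp_neg_mul_mul_expDensity hm n.cast_nonneg]
  have hcont : ContinuousOn (expDensity m) (Ioi 0) :=
    ContinuousOn.congr (by fun_prop) fun y hy => indicator_of_mem hy _
  refine ⟨m, hm, fun x hx => ?_⟩
  simpa [expDensity, hx] using
    Measure.eqOn_of_ae_eq (ae_restrict_of_ae hfg) hf_diff.continuousOn hcont (by simp) hx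

/-- Uniqueness of the exponential fixed point: let `X, Y` be i.i.d. nonnegative random
variables with common differentiable probability density `f` on `ℝ_+`, and `U` Uniform[0,1]
independent of `(X,Y)`.  If `U(X+Y)` has the same law as `X`, then
`f(x) = (1/m)e^{−x/m}` for some `m > 0`. -/
theorem exponential_unique_fixed_point (f : ℝ → ℝ)
    (hf_meas : Measurable f) (hf_nonneg : ∀ x, 0 ≤ f x)
    (hf_supp : ∀ x < (0 : ℝ), f x = 0)
    (hf_int : ∫ x, f x = 1)
    (hf_diff : DifferentiableOn ℝ f (Ioi 0))
    (hfix : Measure.map (fun p : ℝ × ℝ × ℝ => p.2.2 * (p.1 + p.2.1))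
        ((volume.withDensity fun x => ENNReal.ofReal (f x)).prod
          ((volume.withDensity fun x => ENNReal.ofReal (f x)).prod
            (volume.restrict (Icc (0 : ℝ) 1))))
      = volume.withDensity fun x => ENNReal.ofReal (f x)) :
    ∃ m > (0 : ℝ), ∀ x > (0 : ℝ), f x = (1 / m) * Real.exp (-x / m) :=
  exponential_unique_fixed_point_general f hf_nonneg hf_supp hf_int hf_diff hfix
end

section
/- If F̄ : (0,∞) → (0,1) is a differentiable function satisfying the ODE t F̄'(t) = F̄(t)² − F̄(t) with F̄(t) → 1 as t → 0+, then F̄(t) = a/(a + t) for some constant a > 0. -/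
/-! The ODE `t F' = F² - F` separates as `dF / (F (F - 1)) = dt / t`, so `t F / (1 - F)` is a first
integral: it equals a constant `a` on `(0, ∞)`, positive because `0 < F < 1`, and solving
`t F / (1 - F) = a` for `F` gives `F t = a / (a + t)`. -/

open Set Filter

theorem hasDerivAt_mul_div_one_sub_eq_zero {F : ℝ → ℝ} {F' t : ℝ} (hF : HasDerivAt F F' t)
    (hode : t * F' = F t ^ 2 - F t) (hF1 : F t ≠ 1) :
    HasDerivAt (fun s => s * F s / (1 - F s)) 0 t := by
  refine (((hasDerivAt_id t).mul hF).div ((hasDerivAt_const t 1).sub hF)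
    (sub_ne_zero.2 hF1.symm)).congr_deriv ?_
  rw [div_eq_zero_iff]
  left
  simp only [Pi.sub_apply, Pi.mul_apply, id]
  linear_combination hode

theorem eq_div_add_of_mul_div_one_sub_eq {x t a : ℝ} (hx : x ≠ 1) (ha : a + t ≠ 0)
    (h : t * x / (1 - x) = a) : x = a / (a + t) := by
  rw [eq_div_iff ha, ← h]
  field_simp [sub_ne_zero.2 hx.symm]
  ring

theorem laplace_ode_solution_general (F : ℝ → ℝ)
    (hrange : ∀ t > (0 : ℝ), F t ∈ Ioo (0 : ℝ) 1)
    (hdiff : ∀ t > (0 : ℝ), DifferentiableAt ℝ F t)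
    (hode : ∀ t > (0 : ℝ), t * deriv F t = F t ^ 2 - F t) :
    ∃ a > (0 : ℝ), ∀ t > (0 : ℝ), F t = a / (a + t) := by
  have hF1 : ∀ t > (0 : ℝ), F t ≠ 1 := fun t ht => (hrange t ht).2.ne
  have hderiv : ∀ t > (0 : ℝ), HasDerivAt (fun s => s * F s / (1 - F s)) 0 t := fun t ht =>
    hasDerivAt_mul_div_one_sub_eq_zero (hdiff t ht).hasDerivAt (hode t ht) (hF1 t ht)
  obtain ⟨a, ha⟩ := isOpen_Ioi.exists_is_const_of_deriv_eq_zero isPreconnected_Ioi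
    (fun t ht => (hderiv t ht).differentiableAt.differentiableWithinAt)
    (fun t ht => (hderiv t ht).deriv)
  have hapos : 0 < a := by
    obtain ⟨hF1pos, hF1lt⟩ := hrange 1 zero_lt_one
    rw [← ha 1 (mem_Ioi.2 zero_lt_one)]
    exact div_pos (by simpa using hF1pos) (sub_pos.2 hF1lt)
  exact ⟨a, hapos, fun t ht =>
    eq_div_add_of_mul_div_one_sub_eq (hF1 t ht) (by positivity) (ha t ht)⟩

/-- If `F̄ : (0,∞) → (0,1)` is differentiable and satisfies the ODE
`t F̄'(t) = F̄(t)² − F̄(t)` with `F̄(t) → 1` as `t → 0⁺`, then `F̄(t) = a/(a+t)` for some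
constant `a > 0` (the Laplace transform of an exponential distribution). -/
theorem laplace_ode_solution (F : ℝ → ℝ)
    (hrange : ∀ t > (0 : ℝ), F t ∈ Ioo (0 : ℝ) 1)
    (hdiff : ∀ t > (0 : ℝ), DifferentiableAt ℝ F t)
    (hode : ∀ t > (0 : ℝ), t * deriv F t = F t ^ 2 - F t)
    (hlim : Tendsto F (nhdsWithin 0 (Ioi 0)) (nhds 1)) :
    ∃ a > (0 : ℝ), ∀ t > (0 : ℝ), F t = a / (a + t) :=
  laplace_ode_solution_general F hrange hdiff hode
end

section
/- For the wealth-exchange jump process with N agents and interaction rate 1/N, the carré-du-champ (previsible quadratic variation rate) of the martingale M_t^{g,N} = ⟨g, μ_t^N⟩ − ⟨g, μ_0^N⟩ − ∫_0^t ⟨g, Q^{(N)}(μ_s^N)⟩ ds satisfies α^{g,N}(μ_s^{(2,N)}) ≤ (16/N) ||g||_∞², and consequently E[ sup_{s ≤ T} |M_s^{g,N}|² ] ≤ (64/N) ||g||_∞² T, so sup_{s≤T} |M_s^{g,N}| → 0 in L² as N → ∞. -/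
open MeasureTheory ProbabilityTheory Set Filter

/-- The carré-du-champ (previsible quadratic variation rate)
`α^{g,N} = ∫_0^1 ∫∫ ((1/N) K_g(x,y,r))² 1{x+y ≤ W_N} N μ^{(2,N)}(dx,dy) dr`
of the martingale `M^{g,N}`, evaluated at an empirical configuration `x : Fin N → ℝ`
(note `N μ^{(2,N)} = (1/N) Σ_{i≠j} δ_{(x_i,x_j)}`). -/
noncomputable def alphaVal (N : ℕ) (WN : ℝ) (g : ℝ → ℝ) (x : Fin N → ℝ) : ℝ :=
  ∫ r in Icc (0 : ℝ) 1, (1 / (N : ℝ)) * ∑ i : Fin N, ∑ j : Fin N,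
    if i ≠ j ∧ x i + x j ≤ WN then
      ((1 / (N : ℝ)) *
        (g (r * (x i + x j)) + g ((1 - r) * (x i + x j)) - g (x i) - g (x j))) ^ 2
    else 0

/-! Each jump changes `⟨g, μ^N⟩` by at most `4‖g‖_∞ / N`, there are at most `N²` ordered pairs
of agents, and the rate carries a factor `1/N`; hence `α^{g,N} ≤ 16‖g‖_∞² / N`. Integrating this
over `[0, T]` and feeding it into Doob's inequality gives `64‖g‖_∞² T / N`, which tends to `0`. -/

/-- The hypothesis `0 ≤ C` covers the case of a non-integrable `f`, whose integral is `0`. -/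
lemma integral_le_mul_measureReal_univ {α : Type*} [MeasurableSpace α] {μ : Measure α}
    [IsFiniteMeasure μ] {f : α → ℝ} {C : ℝ} (hC : 0 ≤ C) (hf : ∀ x, f x ≤ C) :
    ∫ x, f x ∂μ ≤ C * μ.real univ := by
  by_cases h : Integrable f μ
  · simpa [mul_comm] using integral_mono h (integrable_const C) hf
  · rw [integral_undef h]
    positivity

lemma setIntegral_Icc_le_mul_sub {f : ℝ → ℝ} {C a b : ℝ} (hC : 0 ≤ C) (hab : a ≤ b)
    (hf : ∀ x, f x ≤ C) : ∫ x in Icc a b, f x ≤ C * (b - a) := by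
  simpa [hab] using integral_le_mul_measureReal_univ (μ := volume.restrict (Icc a b)) hC hf

lemma abs_add_sub_sub_le_four_mul {g : ℝ → ℝ} {B : ℝ} (hg : ∀ x, |g x| ≤ B) (a b c d : ℝ) :
    |g a + g b - g c - g d| ≤ 4 * B := by
  linarith [abs_sub (g a + g b - g c) (g d), abs_sub (g a + g b) (g c), abs_add_le (g a) (g b),
    hg a, hg b, hg c, hg d]

lemma alphaVal_integrand_le {N : ℕ} (hN : 1 ≤ N) (WN : ℝ) {g : ℝ → ℝ} {B : ℝ}
    (hg : ∀ x, |g x| ≤ B) (x : Fin N → ℝ) (r : ℝ) :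
    (1 / (N : ℝ)) * ∑ i : Fin N, ∑ j : Fin N,
      (if i ≠ j ∧ x i + x j ≤ WN then
        ((1 / (N : ℝ)) *
          (g (r * (x i + x j)) + g ((1 - r) * (x i + x j)) - g (x i) - g (x j))) ^ 2
      else 0) ≤ 16 / (N : ℝ) * B ^ 2 := by
  have hN₀ : (0 : ℝ) < N := by exact_mod_cast hN
  calc (1 / (N : ℝ)) * ∑ i : Fin N, ∑ j : Fin N, _
      ≤ (1 / (N : ℝ)) * ∑ _i : Fin N, ∑ _j : Fin N, (1 / (N : ℝ)) ^ 2 * (4 * B) ^ 2 := by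
        gcongr with i _ j _
        split_ifs
        · rw [mul_pow, ← sq_abs (g _ + _ - _ - _)]
          gcongr
          exact abs_add_sub_sub_le_four_mul hg _ _ _ _
        · positivity
    _ = 16 / (N : ℝ) * B ^ 2 := by
        simp only [Finset.sum_const, Finset.card_univ, Fintype.card_fin, nsmul_eq_mul]
        field_simp
        ring

lemma alphaVal_le {N : ℕ} (hN : 1 ≤ N) (WN : ℝ) {g : ℝ → ℝ} {B : ℝ}
    (hg : ∀ x, |g x| ≤ B) (x : Fin N → ℝ) :
    alphaVal N WN g x ≤ 16 / (N : ℝ) * B ^ 2 :=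
  (setIntegral_Icc_le_mul_sub (by positivity) zero_le_one
    (alphaVal_integrand_le hN WN hg x)).trans_eq (by ring)

theorem martingale_sup_L2_bound_general
    {Ω : Type*} [MeasureSpace Ω] [IsProbabilityMeasure (ℙ : Measure Ω)]
    (B T : ℝ) (hT : 0 < T)
    (g : ℝ → ℝ) (hg : ∀ x, |g x| ≤ B)
    (WN : ℕ → ℝ)
    (X : (N : ℕ) → ℝ → Fin N → Ω → ℝ)
    (M : (N : ℕ) → ℝ → Ω → ℝ)
    (hDoob : ∀ N, 1 ≤ N →
      ∫ ω, (⨆ s ∈ Icc (0 : ℝ) T, |M N s ω|) ^ 2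
        ≤ 4 * ∫ ω, ∫ s in Icc (0 : ℝ) T, alphaVal N (WN N) g (fun i => X N s i ω)) :
    (∀ N, 1 ≤ N → ∀ x : Fin N → ℝ, alphaVal N (WN N) g x ≤ 16 / (N : ℝ) * B ^ 2) ∧
    (∀ N, 1 ≤ N →
      ∫ ω, (⨆ s ∈ Icc (0 : ℝ) T, |M N s ω|) ^ 2 ≤ 64 / (N : ℝ) * B ^ 2 * T) ∧
    Tendsto (fun N : ℕ => ∫ ω, (⨆ s ∈ Icc (0 : ℝ) T, |M N s ω|) ^ 2)
      atTop (nhds 0) := by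
  have hα : ∀ N, 1 ≤ N → ∀ x : Fin N → ℝ, alphaVal N (WN N) g x ≤ 16 / (N : ℝ) * B ^ 2 :=
    fun N hN => alphaVal_le hN (WN N) hg
  have hsup : ∀ N, 1 ≤ N →
      ∫ ω, (⨆ s ∈ Icc (0 : ℝ) T, |M N s ω|) ^ 2 ≤ 64 / (N : ℝ) * B ^ 2 * T := by
    intro N hN
    have hpath : ∀ ω, ∫ s in Icc (0 : ℝ) T, alphaVal N (WN N) g (fun i => X N s i ω)
        ≤ 16 / (N : ℝ) * B ^ 2 * T := fun ω => by
      simpa using setIntegral_Icc_le_mul_sub (by positivity) hT.le (fun s => hα N hN _)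
    calc _ ≤ 4 * ∫ ω, ∫ s in Icc (0 : ℝ) T, alphaVal N (WN N) g (fun i => X N s i ω) :=
          hDoob N hN
      _ ≤ 4 * (16 / (N : ℝ) * B ^ 2 * T) := by
          gcongr
          simpa using integral_le_mul_measureReal_univ (μ := ℙ) (by positivity) hpath
      _ = 64 / (N : ℝ) * B ^ 2 * T := by ring
  have hbound : Tendsto (fun N : ℕ => 64 / (N : ℝ) * B ^ 2 * T) atTop (nhds 0) :=
    (tendsto_const_div_atTop_nhds_zero_nat (64 * B ^ 2 * T)).congr fun N => by ring
  exact ⟨hα, hsup, squeeze_zero' (.of_forall fun N => integral_nonneg fun ω => sq_nonneg _)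
    ((eventually_ge_atTop 1).mono hsup) hbound⟩

/-- For the wealth-exchange jump process with `N` agents and interaction rate `1/N`:
the carré-du-champ satisfies `α^{g,N} ≤ (16/N)‖g‖_∞²`; consequently, via Doob's `L²`
inequality `E[sup_{s≤T}|M_s^{g,N}|²] ≤ 4 E ∫_0^T α ds`, one gets
`E[sup_{s≤T}|M_s^{g,N}|²] ≤ (64/N)‖g‖_∞² T`, so `sup_{s≤T}|M^{g,N}| → 0` in `L²` as
`N → ∞`. -/
theorem martingale_sup_L2_bound
    {Ω : Type*} [MeasureSpace Ω] [IsProbabilityMeasure (ℙ : Measure Ω)]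
    (B T : ℝ) (hB : 0 ≤ B) (hT : 0 < T)
    (g : ℝ → ℝ) (hg : ∀ x, |g x| ≤ B)
    (WN : ℕ → ℝ)
    (X : (N : ℕ) → ℝ → Fin N → Ω → ℝ)
    (M : (N : ℕ) → ℝ → Ω → ℝ)
    (hDoob : ∀ N, 1 ≤ N →
      ∫ ω, (⨆ s ∈ Icc (0 : ℝ) T, |M N s ω|) ^ 2
        ≤ 4 * ∫ ω, ∫ s in Icc (0 : ℝ) T, alphaVal N (WN N) g (fun i => X N s i ω)) :
    (∀ N, 1 ≤ N → ∀ x : Fin N → ℝ, alphaVal N (WN N) g x ≤ 16 / (N : ℝ) * B ^ 2) ∧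
    (∀ N, 1 ≤ N →
      ∫ ω, (⨆ s ∈ Icc (0 : ℝ) T, |M N s ω|) ^ 2 ≤ 64 / (N : ℝ) * B ^ 2 * T) ∧
    Tendsto (fun N : ℕ => ∫ ω, (⨆ s ∈ Icc (0 : ℝ) T, |M N s ω|) ^ 2)
      atTop (nhds 0) :=
  martingale_sup_L2_bound_general B T hT g hg WN X M hDoob
end
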